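/- arXiv:2603.05501 — 3 statements merged into one kernel-verified Lean document; each statement's English description precedes it below -/
import Mathlib

section
/- Let C and D be team properties, each having the empty team, and suppose D is quasi upward closed. Then the split-disjunction property {T | ∃ T₁ T₂, T₁ ∪ T₂ = T ∧ T₁ ∈ C ∧ T₂ ∈ D} equals the union C ∪ D. -/
def QuasiUpwardClosed {P : Type} (C : Set (Set (P → Bool))) : Prop :=
  (∅ : Set (P → Bool)) ∈ C ∧
    ∀ T ∈ C, T ≠ ∅ → ∀ S : Set (P → Bool), T ⊆ S → S ∈ C

theorem QuasiUpwardClosed.union_mem {P : Type} {D : Set (Set (P → Bool))}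
    (hD : QuasiUpwardClosed D) {T₁ T₂ : Set (P → Bool)} (hT₂ : T₂ ∈ D) (hne : T₂.Nonempty) :
    T₁ ∪ T₂ ∈ D :=
  hD.2 T₂ hT₂ hne.ne_empty _ Set.subset_union_right

theorem split_disjunction_eq_union_general
    (P : Type) (C D : Set (Set (P → Bool)))
    (hCe : (∅ : Set (P → Bool)) ∈ C)
    (hD : QuasiUpwardClosed D) :
    {T : Set (P → Bool) | ∃ T₁ T₂, T₁ ∪ T₂ = T ∧ T₁ ∈ C ∧ T₂ ∈ D} = C ∪ D := by
  ext T
  constructor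
  · rintro ⟨T₁, T₂, rfl, hT₁, hT₂⟩
    rcases T₂.eq_empty_or_nonempty with rfl | hne
    · exact Or.inl (by simpa using hT₁)
    · exact Or.inr (hD.union_mem hT₂ hne)
  · rintro (hC | hTD)
    · exact ⟨T, ∅, Set.union_empty T, hC, hD.1⟩
    · exact ⟨∅, T, Set.empty_union T, hCe, hTD⟩

theorem split_disjunction_eq_union
    (P : Type) [Fintype P] (C D : Set (Set (P → Bool)))
    (hCe : (∅ : Set (P → Bool)) ∈ C)
    (hD : QuasiUpwardClosed D) :
    {T : Set (P → Bool) | ∃ T₁ T₂, T₁ ∪ T₂ = T ∧ T₁ ∈ C ∧ T₂ ∈ D} = C ∪ D :=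
  split_disjunction_eq_union_general P C D hCe hD
end

section
/- Every quasi upward closed team property C over a finite set P containing a nonempty team is definable by a normal form: C = {∅} ∪ ⋃_{T ∈ C, T ≠ ∅} ({∅} ∪ {S | S ⊇ T}). -/
theorem Set.eq_union_biUnion_of_quasiUpwardClosed {α : Type*} {C : Set (Set α)}
    (hCe : ∅ ∈ C) (hC : ∀ T ∈ C, T ≠ ∅ → ∀ S, T ⊆ S → S ∈ C) :
    C = {∅} ∪ ⋃ T ∈ {T ∈ C | T ≠ ∅}, ({∅} ∪ {S | T ⊆ S}) := by
  ext S
  simp only [Set.mem_union, Set.mem_iUnion, Set.mem_singleton_iff, Set.mem_ofPred_eq,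
    exists_prop]
  constructor
  · intro hS
    by_cases hS₀ : S = ∅
    · exact .inl hS₀
    · exact .inr ⟨S, ⟨hS, hS₀⟩, .inr subset_rfl⟩
  · rintro (rfl | ⟨T, ⟨hT, hT₀⟩, rfl | hTS⟩)
    · exact hCe
    · exact hCe
    · exact hC T hT hT₀ S hTS

theorem quasi_upward_closed_normal_form_general
    (P : Type) (C : Set (Set (P → Bool)))
    (hCe : (∅ : Set (P → Bool)) ∈ C)
    (hC : ∀ T ∈ C, T ≠ ∅ → ∀ S : Set (P → Bool), T ⊆ S → S ∈ C) :
    C = {(∅ : Set (P → Bool))} ∪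
        ⋃ T ∈ {T ∈ C | T ≠ ∅},
          ({(∅ : Set (P → Bool))} ∪ {S : Set (P → Bool) | T ⊆ S}) :=
  Set.eq_union_biUnion_of_quasiUpwardClosed hCe hC

theorem quasi_upward_closed_normal_form
    (P : Type) [Fintype P] (C : Set (Set (P → Bool)))
    (hCe : (∅ : Set (P → Bool)) ∈ C)
    (hC : ∀ T ∈ C, T ≠ ∅ → ∀ S : Set (P → Bool), T ⊆ S → S ∈ C)
    (hne : ∃ T ∈ C, T ≠ ∅) :
    C = {(∅ : Set (P → Bool))} ∪
        ⋃ T ∈ {T ∈ C | T ≠ ∅},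
          ({(∅ : Set (P → Bool))} ∪ {S : Set (P → Bool) | T ⊆ S}) :=
  quasi_upward_closed_normal_form_general P C hCe hC
end

section
/- The rule ⊛⊆Ext is sound: if a team T over finite P satisfies p ⊛⊆ x, then for any propositional symbol q not occurring in p, T can be split as T = T₁ ∪ T₂ with T₁ ⊨ pq ⊛⊆ x⊤ and T₂ ⊨ pq ⊛⊆ x⊥. -/
/-- `T ⊨ p ⊛⊆ x`: `T` is the full team, or every `v ∈ T` agrees with `x` on `p`. -/
def SatFullDualPrimIncl {P : Type} (T : Set (P → Bool)) {n : ℕ}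
    (p : Fin n → P) (x : Fin n → Bool) : Prop :=
  T = Set.univ ∨ ∀ v ∈ T, ∀ i, v (p i) = x i

namespace SatFullDualPrimIncl

variable {P : Type} {n : ℕ}

theorem univ (p : Fin n → P) (x : Fin n → Bool) : SatFullDualPrimIncl Set.univ p x :=
  Or.inl rfl

theorem snoc_of_forall {T : Set (P → Bool)} {p : Fin n → P} {x : Fin n → Bool} {q : P}
    {b : Bool} (hp : ∀ v ∈ T, ∀ i, v (p i) = x i) (hq : ∀ v ∈ T, v q = b) :
    SatFullDualPrimIncl T (Fin.snoc p q) (Fin.snoc x b) :=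
  Or.inr fun v hv => Fin.lastCases (by simpa using hq v hv) fun i => by simpa using hp v hv i

end SatFullDualPrimIncl

theorem Set.sep_eq_true_union_sep_eq_false {α : Type*} (T : Set α) (f : α → Bool) :
    {v ∈ T | f v = true} ∪ {v ∈ T | f v = false} = T := by
  ext v
  cases h : f v <;> simp [h]

theorem full_dual_ext_sound_general
    (P : Type) (n : ℕ) (p : Fin n → P) (x : Fin n → Bool)
    (q : P)
    (T : Set (P → Bool)) (hT : SatFullDualPrimIncl T p x) :
    ∃ T₁ T₂ : Set (P → Bool), T₁ ∪ T₂ = T ∧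
      SatFullDualPrimIncl T₁ (Fin.snoc p q) (Fin.snoc x true) ∧
      SatFullDualPrimIncl T₂ (Fin.snoc p q) (Fin.snoc x false) := by
  rcases hT with rfl | hT
  · exact ⟨Set.univ, Set.univ, Set.union_self _, .univ _ _, .univ _ _⟩
  · exact ⟨{v ∈ T | v q = true}, {v ∈ T | v q = false}, T.sep_eq_true_union_sep_eq_false (· q),
      .snoc_of_forall (fun v hv => hT v hv.1) fun _ hv => hv.2,
      .snoc_of_forall (fun v hv => hT v hv.1) fun _ hv => hv.2⟩

theorem full_dual_ext_sound
    (P : Type) [Fintype P] (n : ℕ) (p : Fin n → P) (x : Fin n → Bool)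
    (q : P) (hq : ∀ i, p i ≠ q)
    (T : Set (P → Bool)) (hT : SatFullDualPrimIncl T p x) :
    ∃ T₁ T₂ : Set (P → Bool), T₁ ∪ T₂ = T ∧
      SatFullDualPrimIncl T₁ (Fin.snoc p q) (Fin.snoc x true) ∧
      SatFullDualPrimIncl T₂ (Fin.snoc p q) (Fin.snoc x false) :=
  full_dual_ext_sound_general P n p x q T hT
end
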